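/- arXiv:2107.14264 — 7 statements merged into one kernel-verified Lean document; each statement's English description precedes it below -/
import Mathlib

section
/- Let 𝒳, 𝒮, 𝒴 be finite sets, P_S a pmf on 𝒮, P_{Y|XS} a channel, and c, b : 𝒳 → ℝ≥0 cost functions. Define C_inf(D, B) as the maximum of I(X;Y|S) over pmfs P_X with Σ_x P_X(x) c(x) ≤ D and Σ_x P_X(x) b(x) ≤ B. Then C_inf is jointly concave: for all θ ∈ [0,1] and all pairs (D₁,B₁), (D₂,B₂) whose feasible sets are nonempty, θ C_inf(D₁, B₁) + (1−θ) C_inf(D₂, B₂) ≤ C_inf(θD₁ + (1−θ)D₂, θB₁ + (1−θ)B₂). -/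
open Finset

/-- The conditional mutual information `I(X;Y|S)` of the joint pmf
`P_S(s) P_X(x) P_{Y|XS}(y|x,s)`, as an explicit finite sum with base-2
logarithms (terms with zero probability contribute `0`). -/
noncomputable def condMI {𝒳 𝒮 𝒴 : Type} [Fintype 𝒳] [Fintype 𝒮] [Fintype 𝒴]
    (PS : 𝒮 → ℝ) (W : 𝒳 → 𝒮 → 𝒴 → ℝ) (P : 𝒳 → ℝ) : ℝ :=
  ∑ x, ∑ s, ∑ y, PS s * P x * W x s y *
    Real.logb 2 (W x s y / ∑ x', P x' * W x' s y)

/-- `C_inf(D, B)`: the supremum of `I(X;Y|S)` over pmfs `P_X` on `𝒳` with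
estimation cost `Σ_x P_X(x) c(x) ≤ D` and input cost `Σ_x P_X(x) b(x) ≤ B`. -/
noncomputable def Cinf {𝒳 𝒮 𝒴 : Type} [Fintype 𝒳] [Fintype 𝒮] [Fintype 𝒴]
    (PS : 𝒮 → ℝ) (W : 𝒳 → 𝒮 → 𝒴 → ℝ) (c b : 𝒳 → ℝ) (D B : ℝ) : ℝ :=
  sSup { r : ℝ | ∃ P : 𝒳 → ℝ, (∀ x, 0 ≤ P x) ∧ (∑ x, P x = 1) ∧
    (∑ x, P x * c x ≤ D) ∧ (∑ x, P x * b x ≤ B) ∧ r = condMI PS W P }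

/- ### Auxiliary lemmas -/

/-- Key per-(s,y) identity: the relative-entropy-like sum splits into a linear
part and the `negMulLog` of the output marginal. -/
lemma sum_logb_div_eq {𝒳 : Type} [Fintype 𝒳] (P w : 𝒳 → ℝ)
    (hP : ∀ x, 0 ≤ P x) (hw : ∀ x, 0 ≤ w x) :
    ∑ x, P x * w x * Real.logb 2 (w x / ∑ x', P x' * w x')
      = (∑ x, P x * w x * Real.logb 2 (w x))
        + Real.negMulLog (∑ x', P x' * w x') / Real.log 2 := by
  set Q : ℝ := ∑ x', P x' * w x' with hQ
  have hterm : ∀ x, P x * w x * Real.logb 2 (w x / Q)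
      = P x * w x * Real.logb 2 (w x) - P x * w x * Real.logb 2 Q := by
    intro x
    rcases (mul_nonneg (hP x) (hw x)).eq_or_lt with h0 | h0
    · rw [← h0]; ring
    · have hwx : w x ≠ 0 := by
        intro h; rw [h, mul_zero] at h0; exact lt_irrefl 0 h0
      have hQx : P x * w x ≤ Q := by
        apply Finset.single_le_sum (f := fun x' => P x' * w x')
          (fun i _ => mul_nonneg (hP i) (hw i)) (Finset.mem_univ x)
      have hQ0 : Q ≠ 0 := (lt_of_lt_of_le h0 hQx).ne' 
      rw [Real.logb_div hwx hQ0]; ring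
  calc ∑ x, P x * w x * Real.logb 2 (w x / Q)
      = ∑ x, (P x * w x * Real.logb 2 (w x) - P x * w x * Real.logb 2 Q) :=
        Finset.sum_congr rfl fun x _ => hterm x
    _ = (∑ x, P x * w x * Real.logb 2 (w x)) - Q * Real.logb 2 Q := by
        rw [Finset.sum_sub_distrib, ← Finset.sum_mul]
    _ = (∑ x, P x * w x * Real.logb 2 (w x)) + Real.negMulLog Q / Real.log 2 := by
        rw [Real.negMulLog, Real.logb]
        have h2 : Real.log 2 ≠ 0 := ne_of_gt (Real.log_pos (by norm_num))
        field_simp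
        ring

/-- Decomposition of `condMI` into a part linear in `P` plus an entropy part. -/
lemma condMI_decomp {𝒳 𝒮 𝒴 : Type} [Fintype 𝒳] [Fintype 𝒮] [Fintype 𝒴]
    (PS : 𝒮 → ℝ) (W : 𝒳 → 𝒮 → 𝒴 → ℝ) (P : 𝒳 → ℝ)
    (hP : ∀ x, 0 ≤ P x) (hW0 : ∀ x s y, 0 ≤ W x s y) :
    condMI PS W P
      = (∑ x, ∑ s, ∑ y, PS s * P x * W x s y * Real.logb 2 (W x s y))
        + ∑ s, ∑ y, PS s *
            (Real.negMulLog (∑ x', P x' * W x' s y) / Real.log 2) := by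
  have hswap : ∀ (f : 𝒳 → 𝒮 → 𝒴 → ℝ), (∑ x, ∑ s, ∑ y, f x s y)
      = ∑ s, ∑ y, ∑ x, f x s y := by
    intro f
    rw [Finset.sum_comm]
    exact Finset.sum_congr rfl fun s _ => Finset.sum_comm
  unfold condMI
  rw [hswap, hswap (fun x s y => PS s * P x * W x s y * Real.logb 2 (W x s y)),
    ← Finset.sum_add_distrib]
  refine Finset.sum_congr rfl fun s _ => ?_
  rw [← Finset.sum_add_distrib]
  refine Finset.sum_congr rfl fun y _ => ?_
  have h1 : ∀ (L : 𝒳 → ℝ), ∑ x, PS s * P x * W x s y * L x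
      = PS s * ∑ x, P x * W x s y * L x := by
    intro L; rw [Finset.mul_sum]
    exact Finset.sum_congr rfl fun x _ => by ring
  rw [h1, h1, ← mul_add]
  rw [sum_logb_div_eq (fun x => P x) (fun x => W x s y) hP (fun x => hW0 x s y)]

/-- Concavity of `condMI` in the input distribution. -/
lemma condMI_concave {𝒳 𝒮 𝒴 : Type} [Fintype 𝒳] [Fintype 𝒮] [Fintype 𝒴]
    (PS : 𝒮 → ℝ) (hPS0 : ∀ s, 0 ≤ PS s)
    (W : 𝒳 → 𝒮 → 𝒴 → ℝ) (hW0 : ∀ x s y, 0 ≤ W x s y)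
    (θ : ℝ) (hθ0 : 0 ≤ θ) (hθ1 : θ ≤ 1)
    (P₁ P₂ : 𝒳 → ℝ) (hP₁ : ∀ x, 0 ≤ P₁ x) (hP₂ : ∀ x, 0 ≤ P₂ x) :
    θ * condMI PS W P₁ + (1 - θ) * condMI PS W P₂
      ≤ condMI PS W (fun x => θ * P₁ x + (1 - θ) * P₂ x) := by
  have hmix : ∀ x, 0 ≤ θ * P₁ x + (1 - θ) * P₂ x := fun x =>
    add_nonneg (mul_nonneg hθ0 (hP₁ x)) (mul_nonneg (by linarith) (hP₂ x))
  rw [condMI_decomp PS W P₁ hP₁ hW0, condMI_decomp PS W P₂ hP₂ hW0,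
    condMI_decomp PS W _ hmix hW0]
  have hlin : (∑ x, ∑ s, ∑ y, PS s * (θ * P₁ x + (1 - θ) * P₂ x) * W x s y *
        Real.logb 2 (W x s y))
      = θ * (∑ x, ∑ s, ∑ y, PS s * P₁ x * W x s y * Real.logb 2 (W x s y))
        + (1 - θ) * (∑ x, ∑ s, ∑ y, PS s * P₂ x * W x s y *
            Real.logb 2 (W x s y)) := by
    simp only [Finset.mul_sum, ← Finset.sum_add_distrib]
    refine Finset.sum_congr rfl fun x _ => Finset.sum_congr rfl fun s _ =>
      Finset.sum_congr rfl fun y _ => by ring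
  rw [hlin]
  have hent : θ * (∑ s, ∑ y, PS s *
          (Real.negMulLog (∑ x', P₁ x' * W x' s y) / Real.log 2))
      + (1 - θ) * (∑ s, ∑ y, PS s *
          (Real.negMulLog (∑ x', P₂ x' * W x' s y) / Real.log 2))
      ≤ ∑ s, ∑ y, PS s *
          (Real.negMulLog (∑ x', (θ * P₁ x' + (1 - θ) * P₂ x') * W x' s y)
            / Real.log 2) := by
    simp only [Finset.mul_sum, ← Finset.sum_add_distrib]
    refine Finset.sum_le_sum fun s _ => Finset.sum_le_sum fun y _ => ?_
    set Q₁ : ℝ := ∑ x', P₁ x' * W x' s y with hQ₁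
    set Q₂ : ℝ := ∑ x', P₂ x' * W x' s y with hQ₂
    have hQmix : (∑ x', (θ * P₁ x' + (1 - θ) * P₂ x') * W x' s y)
        = θ * Q₁ + (1 - θ) * Q₂ := by
      rw [hQ₁, hQ₂, Finset.mul_sum, Finset.mul_sum, ← Finset.sum_add_distrib]
      exact Finset.sum_congr rfl fun x _ => by ring
    rw [hQmix]
    have hQ₁0 : (0:ℝ) ≤ Q₁ :=
      Finset.sum_nonneg fun x _ => mul_nonneg (hP₁ x) (hW0 x s y)
    have hQ₂0 : (0:ℝ) ≤ Q₂ :=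
      Finset.sum_nonneg fun x _ => mul_nonneg (hP₂ x) (hW0 x s y)
    have hconc := Real.concaveOn_negMulLog.2 (Set.mem_Ici.2 hQ₁0)
      (Set.mem_Ici.2 hQ₂0) hθ0 (by linarith : (0:ℝ) ≤ 1 - θ) (by ring)
    simp only [smul_eq_mul] at hconc
    have hlog2 : (0:ℝ) < Real.log 2 := Real.log_pos (by norm_num)
    have hc : θ * Real.negMulLog Q₁ + (1 - θ) * Real.negMulLog Q₂
        ≤ Real.negMulLog (θ * Q₁ + (1 - θ) * Q₂) := hconc
    have hfac : (0:ℝ) ≤ PS s / Real.log 2 := div_nonneg (hPS0 s) hlog2.le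
    have := mul_le_mul_of_nonneg_left hc hfac
    calc θ * (PS s * (Real.negMulLog Q₁ / Real.log 2))
          + (1 - θ) * (PS s * (Real.negMulLog Q₂ / Real.log 2))
        = PS s / Real.log 2 *
            (θ * Real.negMulLog Q₁ + (1 - θ) * Real.negMulLog Q₂) := by ring
      _ ≤ PS s / Real.log 2 * Real.negMulLog (θ * Q₁ + (1 - θ) * Q₂) := this
      _ = PS s * (Real.negMulLog (θ * Q₁ + (1 - θ) * Q₂) / Real.log 2) := by
          ring
  linarith

/-- A crude uniform upper bound on `condMI` over pmfs. -/
lemma condMI_le_bound {𝒳 𝒮 𝒴 : Type} [Fintype 𝒳] [Fintype 𝒮] [Fintype 𝒴]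
    (PS : 𝒮 → ℝ) (hPS0 : ∀ s, 0 ≤ PS s) (hPS1 : ∑ s, PS s = 1)
    (W : 𝒳 → 𝒮 → 𝒴 → ℝ) (hW0 : ∀ x s y, 0 ≤ W x s y)
    (hW1 : ∀ x s, ∑ y, W x s y = 1)
    (P : 𝒳 → ℝ) (hP : ∀ x, 0 ≤ P x) :
    condMI PS W P ≤ (Fintype.card 𝒳 : ℝ) / Real.log 2 := by
  have hlog2 : (0:ℝ) < Real.log 2 := Real.log_pos (by norm_num)
  have hterm : ∀ x s y, PS s * P x * W x s y *
      Real.logb 2 (W x s y / ∑ x', P x' * W x' s y)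
      ≤ PS s * W x s y * (1 / Real.log 2) := by
    intro x s y
    set Q : ℝ := ∑ x', P x' * W x' s y with hQ
    rcases (mul_nonneg (hP x) (hW0 x s y)).eq_or_lt with h0 | h0
    · have : PS s * P x * W x s y = 0 := by
        rw [mul_assoc, ← h0, mul_zero]
      rw [this, zero_mul]
      exact mul_nonneg (mul_nonneg (hPS0 s) (hW0 x s y)) (by positivity)
    · have hPx : 0 < P x := by
        rcases (hP x).lt_or_eq with h | h
        · exact h
        · exfalso; rw [← h, zero_mul] at h0; exact lt_irrefl 0 h0
      have hWxy : 0 < W x s y := by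
        rcases (hW0 x s y).lt_or_eq with h | h
        · exact h
        · exfalso; rw [← h, mul_zero] at h0; exact lt_irrefl 0 h0
      have hQge : P x * W x s y ≤ Q := by
        apply Finset.single_le_sum (f := fun x' => P x' * W x' s y)
          (fun i _ => mul_nonneg (hP i) (hW0 i s y)) (Finset.mem_univ x)
      have hQ0 : 0 < Q := lt_of_lt_of_le h0 hQge
      have hdivpos : 0 < W x s y / Q := div_pos hWxy hQ0
      have hdivle : W x s y / Q ≤ 1 / P x := by
        rw [div_le_div_iff₀ hQ0 hPx]
        calc W x s y * P x = P x * W x s y * 1 := by ring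
          _ ≤ Q * 1 := by linarith
          _ = 1 * Q := by ring
      have hlogle : Real.logb 2 (W x s y / Q) ≤ Real.logb 2 (1 / P x) :=
        Real.logb_le_logb_of_le (by norm_num) hdivpos hdivle
      have hnn : (0:ℝ) ≤ PS s * P x * W x s y :=
        mul_nonneg (mul_nonneg (hPS0 s) hPx.le) hWxy.le
      have hstep1 : PS s * P x * W x s y * Real.logb 2 (W x s y / Q)
          ≤ PS s * P x * W x s y * Real.logb 2 (1 / P x) :=
        mul_le_mul_of_nonneg_left hlogle hnn
      have hstep2 : P x * Real.logb 2 (1 / P x) ≤ 1 / Real.log 2 := by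
        have hlogle2 : Real.log (1 / P x) ≤ 1 / P x - 1 :=
          Real.log_le_sub_one_of_pos (one_div_pos.2 hPx)
        have hnum : P x * Real.log (1 / P x) ≤ 1 - P x := by
          have h := mul_le_mul_of_nonneg_left hlogle2 hPx.le
          have h' : P x * (1 / P x - 1) = 1 - P x := by field_simp
          linarith
        calc P x * Real.logb 2 (1 / P x)
            = (P x * Real.log (1 / P x)) / Real.log 2 := by
              rw [Real.logb]; ring
          _ ≤ (1 - P x) / Real.log 2 := by gcongr
          _ ≤ 1 / Real.log 2 := by gcongr; linarith
      calc PS s * P x * W x s y * Real.logb 2 (W x s y / Q)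
          ≤ PS s * P x * W x s y * Real.logb 2 (1 / P x) := hstep1
        _ = (PS s * W x s y) * (P x * Real.logb 2 (1 / P x)) := by ring
        _ ≤ (PS s * W x s y) * (1 / Real.log 2) := by
            apply mul_le_mul_of_nonneg_left hstep2
            exact mul_nonneg (hPS0 s) (hW0 x s y)
        _ = PS s * W x s y * (1 / Real.log 2) := by ring
  calc condMI PS W P
      ≤ ∑ x, ∑ s, ∑ y, PS s * W x s y * (1 / Real.log 2) := by
        refine Finset.sum_le_sum fun x _ => Finset.sum_le_sum fun s _ =>
          Finset.sum_le_sum fun y _ => hterm x s y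
    _ = (Fintype.card 𝒳 : ℝ) / Real.log 2 := by
        have h5 : ∀ (x : 𝒳) (s : 𝒮), ∑ y, PS s * W x s y * (1 / Real.log 2)
            = PS s * (1 / Real.log 2) := by
          intro x s
          rw [Finset.sum_congr rfl fun y _ =>
            (by ring : PS s * W x s y * (1 / Real.log 2)
              = (PS s * (1 / Real.log 2)) * W x s y), ← Finset.mul_sum,
            hW1, mul_one]
        rw [Finset.sum_congr rfl fun x _ => Finset.sum_congr rfl
          (fun s _ => h5 x s)]
        rw [Finset.sum_congr rfl fun x (_ : x ∈ Finset.univ) =>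
          (by rw [← Finset.sum_mul, hPS1, one_mul] :
            ∑ s, PS s * (1 / Real.log 2) = 1 / Real.log 2)]
        rw [Finset.sum_const, Finset.card_univ, nsmul_eq_mul]
        ring

/-- Helper: multiplying a real `sSup` by a nonnegative scalar. -/
lemma mul_csSup_le_aux {t C : ℝ} (ht : 0 ≤ t) {S : Set ℝ} (hS : S.Nonempty)
    (h : ∀ r ∈ S, t * r ≤ C) : t * sSup S ≤ C := by
  rcases ht.eq_or_lt with h0 | h0
  · obtain ⟨r, hr⟩ := hS
    have hC := h r hr
    rw [← h0] at hC ⊢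
    simpa using hC
  · have hsup : sSup S ≤ C / t := by
      refine csSup_le hS fun r hr => ?_
      rw [le_div_iff₀ h0]
      have := h r hr; linarith [h r hr]
    calc t * sSup S ≤ t * (C / t) := mul_le_mul_of_nonneg_left hsup ht
      _ = C := by field_simp

/-- **`C_inf` is jointly concave in `(D, B)`.** -/
theorem stmt_4
    {𝒳 𝒮 𝒴 : Type} [Fintype 𝒳] [Fintype 𝒮] [Fintype 𝒴]
    (PS : 𝒮 → ℝ) (hPS0 : ∀ s, 0 ≤ PS s) (hPS1 : ∑ s, PS s = 1)
    (W : 𝒳 → 𝒮 → 𝒴 → ℝ) (hW0 : ∀ x s y, 0 ≤ W x s y)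
    (hW1 : ∀ x s, ∑ y, W x s y = 1)
    (c b : 𝒳 → ℝ) (hc : ∀ x, 0 ≤ c x) (hb : ∀ x, 0 ≤ b x)
    (θ : ℝ) (hθ0 : 0 ≤ θ) (hθ1 : θ ≤ 1)
    (D₁ B₁ D₂ B₂ : ℝ)
    -- both feasible sets are nonempty:
    (hne₁ : ∃ P : 𝒳 → ℝ, (∀ x, 0 ≤ P x) ∧ (∑ x, P x = 1) ∧
      (∑ x, P x * c x ≤ D₁) ∧ (∑ x, P x * b x ≤ B₁))
    (hne₂ : ∃ P : 𝒳 → ℝ, (∀ x, 0 ≤ P x) ∧ (∑ x, P x = 1) ∧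
      (∑ x, P x * c x ≤ D₂) ∧ (∑ x, P x * b x ≤ B₂)) :
    θ * Cinf PS W c b D₁ B₁ + (1 - θ) * Cinf PS W c b D₂ B₂ ≤
      Cinf PS W c b (θ * D₁ + (1 - θ) * D₂) (θ * B₁ + (1 - θ) * B₂) := by
  set S₁ := { r : ℝ | ∃ P : 𝒳 → ℝ, (∀ x, 0 ≤ P x) ∧ (∑ x, P x = 1) ∧
    (∑ x, P x * c x ≤ D₁) ∧ (∑ x, P x * b x ≤ B₁) ∧ r = condMI PS W P } with hS₁
  set S₂ := { r : ℝ | ∃ P : 𝒳 → ℝ, (∀ x, 0 ≤ P x) ∧ (∑ x, P x = 1) ∧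
    (∑ x, P x * c x ≤ D₂) ∧ (∑ x, P x * b x ≤ B₂) ∧ r = condMI PS W P } with hS₂
  set S₃ := { r : ℝ | ∃ P : 𝒳 → ℝ, (∀ x, 0 ≤ P x) ∧ (∑ x, P x = 1) ∧
    (∑ x, P x * c x ≤ θ * D₁ + (1 - θ) * D₂) ∧
    (∑ x, P x * b x ≤ θ * B₁ + (1 - θ) * B₂) ∧ r = condMI PS W P } with hS₃
  have hS₁ne : S₁.Nonempty := by
    obtain ⟨P, h1, h2, h3, h4⟩ := hne₁
    exact ⟨condMI PS W P, P, h1, h2, h3, h4, rfl⟩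
  have hS₂ne : S₂.Nonempty := by
    obtain ⟨P, h1, h2, h3, h4⟩ := hne₂
    exact ⟨condMI PS W P, P, h1, h2, h3, h4, rfl⟩
  have hS₃bdd : BddAbove S₃ := by
    refine ⟨(Fintype.card 𝒳 : ℝ) / Real.log 2, fun r hr => ?_⟩
    obtain ⟨P, h1, _, _, _, h5⟩ := hr
    rw [h5]
    exact condMI_le_bound PS hPS0 hPS1 W hW0 hW1 P h1
  have key : ∀ r₁ ∈ S₁, ∀ r₂ ∈ S₂, θ * r₁ + (1 - θ) * r₂ ≤ sSup S₃ := by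
    rintro r₁ ⟨P₁, hP₁0, hP₁1, hP₁c, hP₁b, rfl⟩
      r₂ ⟨P₂, hP₂0, hP₂1, hP₂c, hP₂b, rfl⟩
    set P : 𝒳 → ℝ := fun x => θ * P₁ x + (1 - θ) * P₂ x with hP
    have hθ1' : (0:ℝ) ≤ 1 - θ := by linarith
    have hP0 : ∀ x, 0 ≤ P x := fun x =>
      add_nonneg (mul_nonneg hθ0 (hP₁0 x)) (mul_nonneg hθ1' (hP₂0 x))
    have hPsum : ∑ x, P x = 1 := by
      rw [hP]
      rw [Finset.sum_add_distrib, ← Finset.mul_sum, ← Finset.mul_sum,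
        hP₁1, hP₂1]
      ring
    have hsplit : ∀ (f : 𝒳 → ℝ), ∑ x, P x * f x
        = θ * (∑ x, P₁ x * f x) + (1 - θ) * (∑ x, P₂ x * f x) := by
      intro f
      rw [Finset.mul_sum, Finset.mul_sum, ← Finset.sum_add_distrib]
      exact Finset.sum_congr rfl fun x _ => by simp [hP]; ring
    have hPc : ∑ x, P x * c x ≤ θ * D₁ + (1 - θ) * D₂ := by
      rw [hsplit]
      exact add_le_add (mul_le_mul_of_nonneg_left hP₁c hθ0)
        (mul_le_mul_of_nonneg_left hP₂c hθ1')
    have hPb : ∑ x, P x * b x ≤ θ * B₁ + (1 - θ) * B₂ := by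
      rw [hsplit]
      exact add_le_add (mul_le_mul_of_nonneg_left hP₁b hθ0)
        (mul_le_mul_of_nonneg_left hP₂b hθ1')
    have hmem : condMI PS W P ∈ S₃ := ⟨P, hP0, hPsum, hPc, hPb, rfl⟩
    calc θ * condMI PS W P₁ + (1 - θ) * condMI PS W P₂
        ≤ condMI PS W P :=
          condMI_concave PS hPS0 W hW0 θ hθ0 hθ1 P₁ P₂ hP₁0 hP₂0
      _ ≤ sSup S₃ := le_csSup hS₃bdd hmem
  show θ * sSup S₁ + (1 - θ) * sSup S₂ ≤ sSup S₃
  have step1 : ∀ r₂ ∈ S₂, θ * sSup S₁ ≤ sSup S₃ - (1 - θ) * r₂ := by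
    intro r₂ hr₂
    exact mul_csSup_le_aux hθ0 hS₁ne fun r₁ hr₁ => by
      linarith [key r₁ hr₁ r₂ hr₂]
  have step2 : (1 - θ) * sSup S₂ ≤ sSup S₃ - θ * sSup S₁ :=
    mul_csSup_le_aux (by linarith) hS₂ne fun r₂ hr₂ => by
      linarith [step1 r₂ hr₂]
  linarith
end

section
/- Let 𝒮, 𝒳, 𝒵, 𝒯, Ŝ be finite sets, P_S a pmf on 𝒮, P_{Z|SX} a channel, d : 𝒮 × Ŝ → ℝ≥0 a distortion function and ψ : 𝒳 × 𝒵 → 𝒯 a function. Fix a pmf P_X on 𝒳, let (S, X, Z) have joint pmf P_S(s) P_X(x) P_{Z|SX}(z|s,x), and set T := ψ(X, Z). Assume that (i) the pair (S, T) is independent of X, and (ii) S — T — (X, Z) is a Markov chain (S and (X,Z) are conditionally independent given T). Then the expected distortion of the optimal estimator satisfies E[d(S, ŝ*(X,Z))] = Σ_{t∈𝒯} P(T=t) · min_{s'∈Ŝ} Σ_{s∈𝒮} P(S=s | T=t) d(s, s'). -/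
open Finset

lemma stmt6_aux {S W T Sh : Type} [Fintype S] [Fintype W] [Fintype T] [Fintype Sh]
    [Nonempty Sh] [DecidableEq T]
    (p : S → W → ℝ) (hp0 : ∀ s w, 0 ≤ p s w)
    (d : S → Sh → ℝ)
    (ψ : W → T)
    (hMarkov : ∀ s w, p s w * (∑ s', ∑ w', p s' w' * (if ψ w' = ψ w then (1:ℝ) else 0))
        = (∑ w', p s w' * (if ψ w' = ψ w then (1:ℝ) else 0)) * (∑ s', p s' w))
    (est : W → Sh)
    (hest : ∀ w, 0 < ∑ s, p s w → ∀ s' : Sh,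
        ∑ s, (p s w / ∑ s'', p s'' w) * d s (est w) ≤
          ∑ s, (p s w / ∑ s'', p s'' w) * d s s') :
    ∑ s, ∑ w, p s w * d s (est w)
      = ∑ t, (∑ s, ∑ w, p s w * (if ψ w = t then (1:ℝ) else 0)) *
          ⨅ s' : Sh, ∑ s, ((∑ w, p s w * (if ψ w = t then (1:ℝ) else 0)) /
              (∑ s'', ∑ w, p s'' w * (if ψ w = t then (1:ℝ) else 0))) * d s s' := by
  classical
  have hind0 : ∀ (t : T) (w : W), (0:ℝ) ≤ (if ψ w = t then (1:ℝ) else 0) := by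
    intro t w; split <;> norm_num
  have hPt : ∀ t, (∑ s, ∑ w, p s w * (if ψ w = t then (1:ℝ) else 0))
      = ∑ w, (∑ s, p s w) * (if ψ w = t then (1:ℝ) else 0) := by
    intro t
    rw [Finset.sum_comm]
    exact Finset.sum_congr rfl fun w _ => (Finset.sum_mul _ _ _).symm
  have key : ∀ w, ∑ s, p s w * d s (est w)
      = (∑ s, p s w) *
        ⨅ s' : Sh, ∑ s, ((∑ w', p s w' * (if ψ w' = ψ w then (1:ℝ) else 0)) /
            (∑ s'', ∑ w', p s'' w' * (if ψ w' = ψ w then (1:ℝ) else 0))) * d s s' := by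
    intro w
    by_cases hw : (∑ s, p s w) = 0
    · have hz : ∀ s ∈ (Finset.univ : Finset S), p s w = 0 := by
        rw [← Finset.sum_eq_zero_iff_of_nonneg (fun s _ => hp0 s w)]; exact hw
      rw [hw, zero_mul]
      exact Finset.sum_eq_zero fun s hs => by rw [hz s hs, zero_mul]
    · have hmpos : 0 < ∑ s, p s w :=
        lt_of_le_of_ne (Finset.sum_nonneg fun s _ => hp0 s w) (Ne.symm hw)
      have hPtpos : 0 < ∑ s, ∑ w', p s w' * (if ψ w' = ψ w then (1:ℝ) else 0) := by
        rw [hPt (ψ w)]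
        refine lt_of_lt_of_le hmpos ?_
        have := Finset.single_le_sum
          (f := fun w' => (∑ s, p s w') * (if ψ w' = ψ w then (1:ℝ) else 0))
          (fun w' _ => mul_nonneg (Finset.sum_nonneg fun s _ => hp0 s w') (hind0 _ _))
          (Finset.mem_univ w)
        simpa using this
      have hfrac : ∀ s, p s w / (∑ s', p s' w)
          = (∑ w', p s w' * (if ψ w' = ψ w then (1:ℝ) else 0)) /
            (∑ s'', ∑ w', p s'' w' * (if ψ w' = ψ w then (1:ℝ) else 0)) := by
        intro s
        rw [div_eq_div_iff hw (ne_of_gt hPtpos)]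
        exact hMarkov s w
      have hiinf : (⨅ s' : Sh, ∑ s, ((∑ w', p s w' * (if ψ w' = ψ w then (1:ℝ) else 0)) /
            (∑ s'', ∑ w', p s'' w' * (if ψ w' = ψ w then (1:ℝ) else 0))) * d s s')
          = ∑ s, (p s w / (∑ s', p s' w)) * d s (est w) := by
        have hcong : ∀ s' : Sh,
            (∑ s, ((∑ w', p s w' * (if ψ w' = ψ w then (1:ℝ) else 0)) /
              (∑ s'', ∑ w', p s'' w' * (if ψ w' = ψ w then (1:ℝ) else 0))) * d s s')
            = ∑ s, (p s w / (∑ s', p s' w)) * d s s' :=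
          fun s' => Finset.sum_congr rfl fun s _ => by rw [← hfrac s]
        rw [iInf_congr hcong]
        refine le_antisymm (ciInf_le (Set.finite_range _).bddBelow (est w))
          (le_ciInf (hest w hmpos))
      rw [hiinf, Finset.mul_sum]
      exact Finset.sum_congr rfl fun s _ => by
        field_simp
  calc ∑ s, ∑ w, p s w * d s (est w)
      = ∑ w, ∑ s, p s w * d s (est w) := Finset.sum_comm
    _ = ∑ w, (∑ s, p s w) *
          ⨅ s' : Sh, ∑ s, ((∑ w', p s w' * (if ψ w' = ψ w then (1:ℝ) else 0)) /
            (∑ s'', ∑ w', p s'' w' * (if ψ w' = ψ w then (1:ℝ) else 0))) * d s s' :=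
        Finset.sum_congr rfl fun w _ => key w
    _ = ∑ t, (∑ s, ∑ w, p s w * (if ψ w = t then (1:ℝ) else 0)) *
          ⨅ s' : Sh, ∑ s, ((∑ w, p s w * (if ψ w = t then (1:ℝ) else 0)) /
              (∑ s'', ∑ w, p s'' w * (if ψ w = t then (1:ℝ) else 0))) * d s s' := by
        symm
        calc ∑ t, (∑ s, ∑ w, p s w * (if ψ w = t then (1:ℝ) else 0)) *
              ⨅ s' : Sh, ∑ s, ((∑ w, p s w * (if ψ w = t then (1:ℝ) else 0)) /
                  (∑ s'', ∑ w, p s'' w * (if ψ w = t then (1:ℝ) else 0))) * d s s'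
            = ∑ t, ∑ w, ((∑ s, p s w) * (if ψ w = t then (1:ℝ) else 0)) *
              ⨅ s' : Sh, ∑ s, ((∑ w, p s w * (if ψ w = t then (1:ℝ) else 0)) /
                  (∑ s'', ∑ w, p s'' w * (if ψ w = t then (1:ℝ) else 0))) * d s s' :=
              Finset.sum_congr rfl fun t _ => by rw [hPt t, Finset.sum_mul]
          _ = ∑ w, ∑ t, ((∑ s, p s w) * (if ψ w = t then (1:ℝ) else 0)) *
              ⨅ s' : Sh, ∑ s, ((∑ w, p s w * (if ψ w = t then (1:ℝ) else 0)) /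
                  (∑ s'', ∑ w, p s'' w * (if ψ w = t then (1:ℝ) else 0))) * d s s' :=
              Finset.sum_comm
          _ = _ := Finset.sum_congr rfl fun w _ => by
              simp only [mul_ite, ite_mul, mul_one, mul_zero, zero_mul, one_mul,
                Finset.sum_ite_eq, Finset.mem_univ, if_true]

/-- **Distortion of the optimal estimator under a sufficient statistic `T = ψ(X,Z)`.**
If `(S, T)` is independent of `X` and `S — T — (X,Z)` is a Markov chain, then the
expected distortion of the optimal estimator `ŝ*(X,Z)` equals
`Σ_t P(T=t) · min_{s'} Σ_s P(S=s | T=t) d(s, s')`. -/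
theorem stmt_6
    {𝒮 𝒳 𝒵 𝒯 𝒮h : Type} [Fintype 𝒮] [Fintype 𝒳] [Fintype 𝒵] [Fintype 𝒯]
    [Fintype 𝒮h] [Nonempty 𝒮h] [DecidableEq 𝒯]
    (PS : 𝒮 → ℝ) (hPS0 : ∀ s, 0 ≤ PS s) (hPS1 : ∑ s, PS s = 1)
    (PX : 𝒳 → ℝ) (hPX0 : ∀ x, 0 ≤ PX x) (hPX1 : ∑ x, PX x = 1)
    (PZ : 𝒮 → 𝒳 → 𝒵 → ℝ) (hPZ0 : ∀ s x z, 0 ≤ PZ s x z)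
    (hPZ1 : ∀ s x, ∑ z, PZ s x z = 1)
    (d : 𝒮 → 𝒮h → ℝ) (hd : ∀ s t, 0 ≤ d s t)
    (ψ : 𝒳 → 𝒵 → 𝒯)
    -- (i) the pair (S, T) is independent of X :
    (hInd : ∀ s t x,
      (∑ z, PS s * PX x * PZ s x z * (if ψ x z = t then (1:ℝ) else 0)) =
        (∑ x', ∑ z, PS s * PX x' * PZ s x' z * (if ψ x' z = t then (1:ℝ) else 0))
          * PX x)
    -- (ii) Markov chain  S — T — (X, Z) :
    (hMarkov : ∀ s x z,
      (PS s * PX x * PZ s x z) *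
        (∑ s', ∑ x', ∑ z', PS s' * PX x' * PZ s' x' z' *
          (if ψ x' z' = ψ x z then (1:ℝ) else 0)) =
      (∑ x', ∑ z', PS s * PX x' * PZ s x' z' *
          (if ψ x' z' = ψ x z then (1:ℝ) else 0)) *
        (PX x * ∑ s', PS s' * PZ s' x z))
    (est : 𝒳 → 𝒵 → 𝒮h)
    -- `est` is the optimal estimator: for every (x,z) of positive probability it
    -- minimizes  Σ_s P(S=s | X=x, Z=z) d(s, ·) :
    (hest : ∀ x z, 0 < PX x * ∑ s, PS s * PZ s x z → ∀ s' : 𝒮h,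
      ∑ s, ((PS s * PX x * PZ s x z) / (PX x * ∑ s'', PS s'' * PZ s'' x z))
          * d s (est x z) ≤
        ∑ s, ((PS s * PX x * PZ s x z) / (PX x * ∑ s'', PS s'' * PZ s'' x z))
          * d s s') :
    ∑ s, ∑ x, ∑ z, PS s * PX x * PZ s x z * d s (est x z) =
      ∑ t, (∑ s, ∑ x, ∑ z, PS s * PX x * PZ s x z *
          (if ψ x z = t then (1:ℝ) else 0)) *
        ⨅ s' : 𝒮h, ∑ s,
          ((∑ x, ∑ z, PS s * PX x * PZ s x z * (if ψ x z = t then (1:ℝ) else 0)) /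
            (∑ s'', ∑ x, ∑ z, PS s'' * PX x * PZ s'' x z *
              (if ψ x z = t then (1:ℝ) else 0))) * d s s' := by
  classical
  have hsum : ∀ x z, (∑ s, PS s * PX x * PZ s x z) = PX x * ∑ s, PS s * PZ s x z := by
    intro x z
    rw [Finset.mul_sum]
    exact Finset.sum_congr rfl fun s _ => by ring
  have H := stmt6_aux (W := 𝒳 × 𝒵)
      (fun s w => PS s * PX w.1 * PZ s w.1 w.2)
      (fun s w => mul_nonneg (mul_nonneg (hPS0 s) (hPX0 w.1)) (hPZ0 s w.1 w.2))
      d (fun w => ψ w.1 w.2)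
      (fun s w => by
        have := hMarkov s w.1 w.2
        simpa [Fintype.sum_prod_type, hsum w.1 w.2] using this)
      (fun w => est w.1 w.2)
      (fun w hw s' => by
        have hw' : 0 < PX w.1 * ∑ s, PS s * PZ s w.1 w.2 := by
          rw [← hsum w.1 w.2]; simpa using hw
        have := hest w.1 w.2 hw' s'
        simpa [hsum w.1 w.2] using this)
  simpa [Fintype.sum_prod_type] using H
end

section
/- Let 𝒳, 𝒮, 𝒴 be finite sets, P_S a pmf on 𝒮 with P_S(s) > 0 for all s, P_{Y|XS} a channel with strictly positive entries, c : 𝒳 → ℝ≥0 a cost function and μ ≥ 0. For a pmf P_X on 𝒳 with strictly positive entries and a conditional pmf Q_{X|YS}, define J_μ(P_X, Q_{X|YS}) := Σ_{x,s,y} P_X(x) P_S(s) P_{Y|XS}(y|x,s) log( Q_{X|YS}(x|y,s) / P_X(x) ) − μ Σ_x P_X(x) c(x). Then the conditional pmf Q*_{X|YS}(x|y,s) := P_X(x) P_{Y|XS}(y|x,s) / Σ_{x'} P_X(x') P_{Y|XS}(y|x',s) maximizes J_μ(P_X, ·): for every conditional pmf Q_{X|YS}, J_μ(P_X, Q_{X|YS})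 ≤ J_μ(P_X, Q*_{X|YS}). -/
open Finset
open scoped Classical

/-- The Blahut–Arimoto-type objective
`J_μ(P_X, Q) = Σ_{x,s,y} P_X(x) P_S(s) W(y|x,s) log (Q(x|y,s)/P_X(x)) − μ Σ_x P_X(x) c(x)`,
valued in `EReal` so that a term with `Q(x|y,s) = 0` (and positive weight)
contributes `−∞`. -/
noncomputable def Jmu {𝒳 𝒮 𝒴 : Type} [Fintype 𝒳] [Fintype 𝒮] [Fintype 𝒴]
    (PS : 𝒮 → ℝ) (W : 𝒳 → 𝒮 → 𝒴 → ℝ) (c : 𝒳 → ℝ) (μ : ℝ)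
    (P : 𝒳 → ℝ) (Q : 𝒴 → 𝒮 → 𝒳 → ℝ) : EReal :=
  (∑ x, ∑ s, ∑ y,
      (if Q y s x = 0 then (⊥ : EReal)
       else ((P x * PS s * W x s y * Real.log (Q y s x / P x) : ℝ) : EReal)))
    - ((μ * ∑ x, P x * c x : ℝ) : EReal)

noncomputable def erealCoeHom : ℝ →+ EReal := ⟨⟨Real.toEReal, EReal.coe_zero⟩, EReal.coe_add⟩

private lemma ereal_coe_sum {α : Type*} (s : Finset α) (f : α → ℝ) :
    ((∑ i ∈ s, f i : ℝ) : EReal) = ∑ i ∈ s, ((f i : ℝ) : EReal) :=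
  map_sum erealCoeHom f s

private lemma sum_eq_bot' {α : Type*} (s : Finset α) (f : α → EReal) {a : α}
    (ha : a ∈ s) (h : f a = ⊥) : ∑ i ∈ s, f i = ⊥ := by
  rw [← Finset.add_sum_erase s f ha, h, EReal.bot_add]

/-- **Blahut–Arimoto step (b): the backward channel maximizes `J_μ(P_X, ·)`.**
For a strictly positive input pmf `P` and strictly positive channel `W`, the
conditional pmf `Q*(x|y,s) = P(x) W(y|x,s) / Σ_{x'} P(x') W(y|x',s)` maximizes
`J_μ(P, ·)` over all conditional pmfs `Q`. -/
theorem stmt_7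
    {𝒳 𝒮 𝒴 : Type} [Fintype 𝒳] [Fintype 𝒮] [Fintype 𝒴]
    (PS : 𝒮 → ℝ) (hPS : ∀ s, 0 < PS s) (hPS1 : ∑ s, PS s = 1)
    (W : 𝒳 → 𝒮 → 𝒴 → ℝ) (hW : ∀ x s y, 0 < W x s y)
    (hW1 : ∀ x s, ∑ y, W x s y = 1)
    (c : 𝒳 → ℝ) (hc : ∀ x, 0 ≤ c x) (μ : ℝ) (hμ : 0 ≤ μ)
    (P : 𝒳 → ℝ) (hP : ∀ x, 0 < P x) (hP1 : ∑ x, P x = 1)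
    (Q : 𝒴 → 𝒮 → 𝒳 → ℝ) (hQ0 : ∀ y s x, 0 ≤ Q y s x)
    (hQ1 : ∀ y s, ∑ x, Q y s x = 1) :
    Jmu PS W c μ P Q ≤
      Jmu PS W c μ P (fun y s x => P x * W x s y / ∑ x', P x' * W x' s y) := by
  classical
  have h𝒳 : Nonempty 𝒳 := by
    by_contra h
    rw [not_nonempty_iff] at h
    rw [Finset.univ_eq_empty, Finset.sum_empty] at hP1
    norm_num at hP1
  have hZ : ∀ y s, 0 < ∑ x', P x' * W x' s y := fun y s =>
    Finset.sum_pos (fun x _ => mul_pos (hP x) (hW x s y)) Finset.univ_nonempty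
  have hQs : ∀ y s x, 0 < P x * W x s y / ∑ x', P x' * W x' s y :=
    fun y s x => div_pos (mul_pos (hP x) (hW x s y)) (hZ y s)
  by_cases hzero : ∃ y s x, Q y s x = 0
  · obtain ⟨y0, s0, x0, h0⟩ := hzero
    have : (∑ x, ∑ s, ∑ y,
        (if Q y s x = 0 then (⊥ : EReal)
         else ((P x * PS s * W x s y * Real.log (Q y s x / P x) : ℝ) : EReal))) = ⊥ := by
      refine sum_eq_bot' _ _ (Finset.mem_univ x0) ?_
      refine sum_eq_bot' _ _ (Finset.mem_univ s0) ?_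
      refine sum_eq_bot' _ _ (Finset.mem_univ y0) ?_
      simp [h0]
    rw [Jmu, this, EReal.bot_sub]
    exact bot_le
  · push_neg at hzero
    have hQpos : ∀ y s x, 0 < Q y s x := fun y s x => (hQ0 y s x).lt_of_ne' (hzero y s x)
    rw [Jmu, Jmu]
    refine EReal.sub_le_sub ?_ le_rfl
    have hL : (∑ x, ∑ s, ∑ y,
        (if Q y s x = 0 then (⊥ : EReal)
         else ((P x * PS s * W x s y * Real.log (Q y s x / P x) : ℝ) : EReal)))
        = ((∑ x, ∑ s, ∑ y, P x * PS s * W x s y * Real.log (Q y s x / P x) : ℝ) : EReal) := by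
      have e1 : ∀ (x : 𝒳) (s : 𝒮) (y : 𝒴),
          (if Q y s x = 0 then (⊥ : EReal)
           else ((P x * PS s * W x s y * Real.log (Q y s x / P x) : ℝ) : EReal))
          = ((P x * PS s * W x s y * Real.log (Q y s x / P x) : ℝ) : EReal) :=
        fun x s y => if_neg (hzero y s x)
      simp only [e1, ereal_coe_sum]
    have hR : (∑ x, ∑ s, ∑ y,
        (if (fun y s x => P x * W x s y / ∑ x', P x' * W x' s y) y s x = 0 then (⊥ : EReal)
         else ((P x * PS s * W x s y *
            Real.log ((fun y s x => P x * W x s y / ∑ x', P x' * W x' s y) y s x / P x) : ℝ) : EReal)))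
        = ((∑ x, ∑ s, ∑ y, P x * PS s * W x s y *
            Real.log ((P x * W x s y / ∑ x', P x' * W x' s y) / P x) : ℝ) : EReal) := by
      have e2 : ∀ (x : 𝒳) (s : 𝒮) (y : 𝒴),
          (if P x * W x s y / ∑ x', P x' * W x' s y = 0 then (⊥ : EReal)
           else ((P x * PS s * W x s y *
              Real.log ((P x * W x s y / ∑ x', P x' * W x' s y) / P x) : ℝ) : EReal))
          = ((P x * PS s * W x s y *
              Real.log ((P x * W x s y / ∑ x', P x' * W x' s y) / P x) : ℝ) : EReal) :=
        fun x s y => if_neg (ne_of_gt (hQs y s x))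
      simp only [e2, ereal_coe_sum]
    rw [hL, hR, EReal.coe_le_coe_iff]
    -- now a real inequality; reorder sums to (s, y, x)
    have reorder : ∀ (f : 𝒳 → 𝒮 → 𝒴 → ℝ),
        ∑ x, ∑ s, ∑ y, f x s y = ∑ s, ∑ y, ∑ x, f x s y := by
      intro f
      rw [Finset.sum_comm]
      exact Finset.sum_congr rfl fun s _ => Finset.sum_comm
    rw [reorder, reorder]
    refine Finset.sum_le_sum fun s _ => ?_
    refine Finset.sum_le_sum fun y _ => ?_
    -- fixed (s, y): Gibbs inequality over x
    set Z : ℝ := ∑ x', P x' * W x' s y with hZdef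
    have hZpos : 0 < Z := hZ y s
    have hlog : ∀ x, P x * PS s * W x s y * Real.log (Q y s x / P x)
        ≤ P x * PS s * W x s y * Real.log ((P x * W x s y / Z) / P x)
          + PS s * (Z * Q y s x - P x * W x s y) := by
      intro x
      have hpw : 0 < P x * W x s y := mul_pos (hP x) (hW x s y)
      have hq : 0 < Q y s x := hQpos y s x
      have hqs : 0 < P x * W x s y / Z := div_pos hpw hZpos
      have ht : 0 < Q y s x / (P x * W x s y / Z) := div_pos hq hqs
      have hlog1 := Real.log_le_sub_one_of_pos ht
      rw [Real.log_div (ne_of_gt hq) (ne_of_gt hqs)] at hlog1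
      -- log Q - log Qs ≤ Q/Qs - 1, and Q/Qs = Z*Q/(P W)
      have hQsval : Q y s x / (P x * W x s y / Z) = Z * Q y s x / (P x * W x s y) := by
        field_simp
      rw [hQsval] at hlog1
      have hdiv : ∀ (a : ℝ), 0 < a → Real.log (a / P x) = Real.log a - Real.log (P x) :=
        fun a ha => Real.log_div (ne_of_gt ha) (ne_of_gt (hP x))
      rw [hdiv _ hq, hdiv _ hqs]
      have hmul : P x * W x s y * (Z * Q y s x / (P x * W x s y)) = Z * Q y s x := by
        field_simp
        exact div_self hpw.ne'
      have h2 : P x * W x s y * Real.log (Q y s x)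
          ≤ P x * W x s y * Real.log (P x * W x s y / Z) + (Z * Q y s x - P x * W x s y) := by
        nlinarith [mul_le_mul_of_nonneg_left hlog1 hpw.le]
      nlinarith [mul_le_mul_of_nonneg_left h2 (hPS s).le]
    calc ∑ x, P x * PS s * W x s y * Real.log (Q y s x / P x)
        ≤ ∑ x, (P x * PS s * W x s y * Real.log ((P x * W x s y / Z) / P x)
            + PS s * (Z * Q y s x - P x * W x s y)) :=
          Finset.sum_le_sum fun x _ => hlog x
      _ = ∑ x, P x * PS s * W x s y * Real.log ((P x * W x s y / Z) / P x) := by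
          rw [Finset.sum_add_distrib]
          have : ∑ x, PS s * (Z * Q y s x - P x * W x s y) = 0 := by
            rw [← Finset.mul_sum]
            have : ∑ x, (Z * Q y s x - P x * W x s y) = Z * (∑ x, Q y s x) - Z := by
              rw [Finset.sum_sub_distrib, ← Finset.mul_sum, hZdef]
            rw [this, hQ1 y s]
            ring
          rw [this, add_zero]
end

section
/- Let q, γ ∈ (0,1) and let (S₁, S₂) have the joint pmf P(0,0) = 1−q, P(0,1) = 0, P(1,1) = qγ, P(1,0) = q(1−γ). Let X ∈ {0,1} have pmf P_X with p := P_X(0), independent of (S₁,S₂), and consider the flipping-input broadcast channel Y₁ := S₁·X, Y₂ := S₂·(1−X), with feedback Z = (Y₁, Y₂). Then the minimum over all estimator functions h : {0,1}³ → {0,1} of the expected Hamming distortion E[ S₁ ⊕ h(X, Y₁, Y₂) ] equals p · min{ q(1−γ), 1−q }. -/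
open Finset

/-- The joint state pmf of Example 4:
`P(0,0) = 1−q`, `P(0,1) = 0`, `P(1,1) = qγ`, `P(1,0) = q(1−γ)`. -/
noncomputable def PS12 (q γ : ℝ) (s₁ s₂ : Fin 2) : ℝ :=
  if s₁ = 0 then (if s₂ = 0 then 1 - q else 0)
  else (if s₂ = 0 then q * (1 - γ) else q * γ)

/-- **Example 4, distortion of `S₁` for the flipping-input BC:** with
`Y₁ = S₁·X`, `Y₂ = S₂·(1−X)` and feedback `Z = (Y₁,Y₂)`, the minimal expected
Hamming distortion over all estimators of `S₁` from `(X, Y₁, Y₂)` equals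
`p · min{q(1−γ), 1−q}` where `p = P_X(0)`. -/
theorem stmt_15 (q γ : ℝ) (hq0 : 0 < q) (hq1 : q < 1)
    (hγ0 : 0 < γ) (hγ1 : γ < 1)
    (PX : Fin 2 → ℝ) (hPX0 : ∀ x, 0 ≤ PX x) (hPX1 : ∑ x, PX x = 1) :
    (⨅ h : Fin 2 → Fin 2 → Fin 2 → Fin 2,
        ∑ x : Fin 2, ∑ s₁ : Fin 2, ∑ s₂ : Fin 2,
          PX x * PS12 q γ s₁ s₂ *
            (if h x (s₁ * x) (s₂ * (1 - x)) = s₁ then (0:ℝ) else 1))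
      = PX 0 * min (q * (1 - γ)) (1 - q) := by
  have two : ∀ a : Fin 2, a = 0 ∨ a = 1 := by decide
  have h0 := hPX0 0
  have h1 := hPX0 1
  have hqγ : (0:ℝ) ≤ q * γ := by positivity
  have hq1γ : (0:ℝ) ≤ q * (1 - γ) := by nlinarith
  have hq' : (0:ℝ) ≤ 1 - q := by linarith
  apply le_antisymm
  · set h₀ : Fin 2 → Fin 2 → Fin 2 → Fin 2 := fun x y1 y2 =>
      if x = 1 then y1 else if y2 = 1 then 1
      else if q * (1 - γ) ≤ 1 - q then 0 else 1 with hh₀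
    refine (ciInf_le (Set.Finite.bddBelow (Set.finite_range _)) h₀).trans_eq ?_
    simp only [hh₀, Fin.sum_univ_two, PS12]
    norm_num
    rcases le_or_gt (q * (1 - γ)) (1 - q) with hle | hlt
    · simp [hle, not_lt.mpr hle, min_eq_left hle]
    · simp [not_le.mpr hlt, hlt, min_eq_right hlt.le]
  · refine le_ciInf fun h => ?_
    simp only [Fin.sum_univ_two, PS12]
    norm_num
    have key : PX 0 * min (q * (1 - γ)) (1 - q) ≤
        (if h 0 0 0 = 0 then (0:ℝ) else PX 0 * (1 - q)) +
        (if h 0 0 0 = 1 then (0:ℝ) else PX 0 * (q * (1 - γ))) := by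
      rcases two (h 0 0 0) with e | e <;> simp [e]
      · exact mul_le_mul_of_nonneg_left (min_le_left _ _) h0
      · exact mul_le_mul_of_nonneg_left (min_le_right _ _) h0
    have r1 : (0:ℝ) ≤ (if h 0 0 1 = 1 then (0:ℝ) else PX 0 * (q * γ)) := by
      split_ifs
      · exact le_rfl
      · exact mul_nonneg h0 hqγ
    have r2 : (0:ℝ) ≤ (if h 1 0 0 = 0 then (0:ℝ) else PX 1 * (1 - q)) := by
      split_ifs
      · exact le_rfl
      · exact mul_nonneg h1 hq'
    have r3 : (0:ℝ) ≤ (if h 1 1 0 = 1 then (0:ℝ) else PX 1 * (q * (1 - γ))) := by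
      split_ifs
      · exact le_rfl
      · exact mul_nonneg h1 hq1γ
    have r4 : (0:ℝ) ≤ (if h 1 1 0 = 1 then (0:ℝ) else PX 1 * (q * γ)) := by
      split_ifs
      · exact le_rfl
      · exact mul_nonneg h1 hqγ
    linarith [key, r1, r2, r3, r4]
end

section
/- Let q, γ ∈ (0,1) and let (S₁, S₂) have the joint pmf P(0,0) = 1−q, P(0,1) = 0, P(1,1) = qγ, P(1,0) = q(1−γ). Let X ∈ {0,1} have pmf P_X with p := P_X(0), independent of (S₁,S₂), and consider the flipping-input broadcast channel Y₁ := S₁·X, Y₂ := S₂·(1−X), with feedback Z = (Y₁, Y₂). Then the minimum over all estimator functions h : {0,1}³ → {0,1} of the expected Hamming distortion E[ S₂ ⊕ h(X, Y₁, Y₂) ] equals (1−p) · q · min{ γ, 1−γ }. -/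
open Finset

set_option maxHeartbeats 1000000 in
/-- **Example 4, distortion of `S₂` for the flipping-input BC:** with
`Y₁ = S₁·X`, `Y₂ = S₂·(1−X)` and feedback `Z = (Y₁,Y₂)`, the minimal expected
Hamming distortion over all estimators of `S₂` from `(X, Y₁, Y₂)` equals
`(1−p) · q · min{γ, 1−γ}` where `p = P_X(0)`. -/
theorem stmt_16 (q γ : ℝ) (hq0 : 0 < q) (hq1 : q < 1)
    (hγ0 : 0 < γ) (hγ1 : γ < 1)
    (PX : Fin 2 → ℝ) (hPX0 : ∀ x, 0 ≤ PX x) (hPX1 : ∑ x, PX x = 1) :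
    (⨅ h : Fin 2 → Fin 2 → Fin 2 → Fin 2,
        ∑ x : Fin 2, ∑ s₁ : Fin 2, ∑ s₂ : Fin 2,
          PX x * PS12 q γ s₁ s₂ *
            (if h x (s₁ * x) (s₂ * (1 - x)) = s₂ then (0:ℝ) else 1))
      = (1 - PX 0) * q * min γ (1 - γ) := by
  have hp1 : PX 1 = 1 - PX 0 := by
    have := hPX1
    simp [Fin.sum_univ_two] at this
    linarith
  have hbdd : BddBelow (Set.range fun h : Fin 2 → Fin 2 → Fin 2 → Fin 2 =>
      ∑ x : Fin 2, ∑ s₁ : Fin 2, ∑ s₂ : Fin 2,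
        PX x * PS12 q γ s₁ s₂ *
          (if h x (s₁ * x) (s₂ * (1 - x)) = s₂ then (0:ℝ) else 1)) := by
    refine ⟨0, ?_⟩
    rintro r ⟨h, rfl⟩
    refine Finset.sum_nonneg fun x _ => Finset.sum_nonneg fun s₁ _ =>
      Finset.sum_nonneg fun s₂ _ => ?_
    have hps : 0 ≤ PS12 q γ s₁ s₂ := by
      unfold PS12; split_ifs <;> nlinarith
    have : (0:ℝ) ≤ (if h x (s₁ * x) (s₂ * (1 - x)) = s₂ then (0:ℝ) else 1) := by
      split_ifs <;> norm_num
    exact mul_nonneg (mul_nonneg (hPX0 x) hps) this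
  have hfin2 : ∀ v : Fin 2, v = 0 ∨ v = 1 := by decide
  apply le_antisymm
  · rcases le_total γ (1 - γ) with hc | hc
    · calc (⨅ h : Fin 2 → Fin 2 → Fin 2 → Fin 2,
            ∑ x : Fin 2, ∑ s₁ : Fin 2, ∑ s₂ : Fin 2,
              PX x * PS12 q γ s₁ s₂ *
                (if h x (s₁ * x) (s₂ * (1 - x)) = s₂ then (0:ℝ) else 1))
          ≤ _ := ciInf_le hbdd (fun x _ y₂ => if x = 0 then y₂ else 0)
        _ = (1 - PX 0) * q * min γ (1 - γ) := by
            rw [min_eq_left hc]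
            simp [Fin.sum_univ_two, PS12]
            linear_combination (q * γ) * hp1
    · calc (⨅ h : Fin 2 → Fin 2 → Fin 2 → Fin 2,
            ∑ x : Fin 2, ∑ s₁ : Fin 2, ∑ s₂ : Fin 2,
              PX x * PS12 q γ s₁ s₂ *
                (if h x (s₁ * x) (s₂ * (1 - x)) = s₂ then (0:ℝ) else 1))
          ≤ _ := ciInf_le hbdd (fun x y₁ y₂ => if x = 0 then y₂ else y₁)
        _ = (1 - PX 0) * q * min γ (1 - γ) := by
            rw [min_eq_right hc]
            simp [Fin.sum_univ_two, PS12]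
            linear_combination (q * (1 - γ)) * hp1
  · apply le_ciInf
    intro h
    simp only [Fin.sum_univ_two, PS12]
    norm_num
    have hm1 : min γ (1 - γ) ≤ γ := min_le_left _ _
    have hm2 : min γ (1 - γ) ≤ 1 - γ := min_le_right _ _
    have hm0 : 0 ≤ min γ (1 - γ) := le_min (le_of_lt hγ0) (by linarith)
    have h0 := hPX0 0
    have h1 : (0:ℝ) ≤ 1 - PX 0 := hp1 ▸ hPX0 1
    rw [hp1]
    rcases hfin2 (h 0 0 0) with e1 | e1 <;>
    rcases hfin2 (h 0 0 1) with e2 | e2 <;>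
    rcases hfin2 (h 1 0 0) with e3 | e3 <;>
    rcases hfin2 (h 1 1 0) with e4 | e4 <;>
      simp [e1, e2, e3, e4] <;>
      nlinarith [mul_nonneg (mul_nonneg h1 hq0.le) (sub_nonneg.2 hm1),
        mul_nonneg (mul_nonneg h1 hq0.le) (sub_nonneg.2 hm2),
        mul_nonneg (mul_nonneg h0 hq0.le) hγ0.le,
        mul_nonneg (mul_nonneg h0 hq0.le) (by linarith : (0:ℝ) ≤ 1 - γ),
        mul_nonneg h0 (by linarith : (0:ℝ) ≤ 1 - q),
        mul_nonneg h1 (by linarith : (0:ℝ) ≤ 1 - q),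
        mul_nonneg (mul_nonneg h1 hq0.le) hγ0.le,
        mul_nonneg (mul_nonneg h1 hq0.le) (by linarith : (0:ℝ) ≤ 1 - γ)]
end

section
/- Let q ∈ (0,1), let S₁, S₂ be i.i.d. Bernoulli(q) random variables, let N be Bernoulli(1/2), let (X₁, X₂) be a {0,1}²-valued pair with arbitrary joint pmf such that (X₁, X₂) is independent of (S₁, S₂, N), and set t := P(X₁ ≠ X₂) and Y_k' := S_k · (X_k ⊕ N) for k = 1, 2. Then for each k ∈ {1,2}, the minimum over all estimator functions h : {0,1}⁴ → {0,1} of the expected Hamming distortion E[ S_k ⊕ h(X₁, X₂, Y₁', Y₂') ] equals (1/2)·t·q·( min{q, 1−q} + (1−q) ) + (1/2)·(1−t)·min{ q, (1−q)(2−q) }. -/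
open Finset

noncomputable def dueckG (q : ℝ) (x₁ x₂ : Fin 2) (k : Fin 2 → Fin 2 → Fin 2) : ℝ :=
  ∑ s₁ : Fin 2, ∑ s₂ : Fin 2, ∑ n : Fin 2,
    (if s₁ = 1 then q else 1 - q) * (if s₂ = 1 then q else 1 - q) * (1 / 2) *
      (if k (s₁ * (x₁ + n)) (s₂ * (x₂ + n)) = s₁ then (0:ℝ) else 1)

noncomputable def dueckChi (v : Fin 2) : ℝ := if v = 1 then 1 else 0

lemma dueckChi_nonneg (v : Fin 2) : 0 ≤ dueckChi v := by
  unfold dueckChi; split_ifs <;> norm_num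

lemma dueckChi_le_one (v : Fin 2) : dueckChi v ≤ 1 := by
  unfold dueckChi; split_ifs <;> norm_num

lemma dueck_if0 (v : Fin 2) (r : ℝ) : (if v = 0 then (0:ℝ) else r) = dueckChi v * r := by
  fin_cases v <;> simp [dueckChi]

lemma dueck_if1 (v : Fin 2) (r : ℝ) : (if v = 1 then (0:ℝ) else r) = (1 - dueckChi v) * r := by
  fin_cases v <;> simp [dueckChi]

lemma dueckG_lb_eq (q : ℝ) (hq0 : 0 < q) (hq1 : q < 1) (x : Fin 2)
    (k : Fin 2 → Fin 2 → Fin 2) :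
    (1/2) * min q ((1-q)*(2-q)) ≤ dueckG q x x k := by
  have ha0 := dueckChi_nonneg (k 0 0); have ha1 := dueckChi_le_one (k 0 0)
  have hb0 := dueckChi_nonneg (k 0 1); have hb1 := dueckChi_le_one (k 0 1)
  have hc0 := dueckChi_nonneg (k 1 0); have hc1 := dueckChi_le_one (k 1 0)
  have hd0 := dueckChi_nonneg (k 1 1); have hd1 := dueckChi_le_one (k 1 1)
  fin_cases x <;>
  · simp [dueckG, Fin.sum_univ_two]
    simp only [dueck_if0, dueck_if1]
    rcases le_total q ((1-q)*(2-q)) with h | h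
    · rw [min_eq_left h]
      nlinarith [mul_nonneg ha0 (by nlinarith : (0:ℝ) ≤ 2 - 4*q + q^2),
        mul_nonneg hb0 (mul_nonneg (by linarith : (0:ℝ) ≤ 1-q) hq0.le),
        mul_nonneg (by linarith : 0 ≤ 1 - dueckChi (k 1 0)) (mul_nonneg hq0.le (by linarith : (0:ℝ) ≤ 1-q)),
        mul_nonneg (by linarith : 0 ≤ 1 - dueckChi (k 1 1)) (mul_nonneg hq0.le hq0.le)]
    · rw [min_eq_right h]
      nlinarith [mul_nonneg (by linarith : 0 ≤ 1 - dueckChi (k 0 0)) (by nlinarith : (0:ℝ) ≤ 4*q - q^2 - 2),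
        mul_nonneg hb0 (mul_nonneg (by linarith : (0:ℝ) ≤ 1-q) hq0.le),
        mul_nonneg (by linarith : 0 ≤ 1 - dueckChi (k 1 0)) (mul_nonneg hq0.le (by linarith : (0:ℝ) ≤ 1-q)),
        mul_nonneg (by linarith : 0 ≤ 1 - dueckChi (k 1 1)) (mul_nonneg hq0.le hq0.le)]

lemma dueckG_lb_ne (q : ℝ) (hq0 : 0 < q) (hq1 : q < 1) (x₁ x₂ : Fin 2) (hne : x₁ ≠ x₂)
    (k : Fin 2 → Fin 2 → Fin 2) :
    (1/2) * q * (min q (1-q) + (1-q)) ≤ dueckG q x₁ x₂ k := by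
  have ha0 := dueckChi_nonneg (k 0 0); have ha1 := dueckChi_le_one (k 0 0)
  have hb0 := dueckChi_nonneg (k 0 1); have hb1 := dueckChi_le_one (k 0 1)
  have hc0 := dueckChi_nonneg (k 1 0); have hc1 := dueckChi_le_one (k 1 0)
  fin_cases x₁ <;> fin_cases x₂ <;> first
  | exact absurd rfl hne
  | · simp [dueckG, Fin.sum_univ_two]
      simp only [dueck_if0, dueck_if1]
      rcases le_total q (1-q) with h | h
      · rw [min_eq_left h]
        nlinarith [mul_nonneg ha0 (mul_nonneg (by linarith : (0:ℝ) ≤ 1-q) (by linarith : (0:ℝ) ≤ 1-q)),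
          mul_nonneg hb0 (mul_nonneg hq0.le (by linarith : (0:ℝ) ≤ 1 - 2*q)),
          mul_nonneg (by linarith : 0 ≤ 1 - dueckChi (k 1 0)) hq0.le]
      · rw [min_eq_right h]
        nlinarith [mul_nonneg ha0 (mul_nonneg (by linarith : (0:ℝ) ≤ 1-q) (by linarith : (0:ℝ) ≤ 1-q)),
          mul_nonneg (by linarith : 0 ≤ 1 - dueckChi (k 0 1)) (mul_nonneg hq0.le (by linarith : (0:ℝ) ≤ 2*q - 1)),
          mul_nonneg (by linarith : 0 ≤ 1 - dueckChi (k 1 0)) hq0.le]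

noncomputable def dueckH (q : ℝ) : Fin 2 → Fin 2 → Fin 2 → Fin 2 → Fin 2 :=
  fun x₁ x₂ y₁ y₂ =>
    if y₁ = 1 then 1
    else if y₂ = 0 then (if x₁ = x₂ then (if q ≤ (1-q)*(2-q) then 0 else 1) else 0)
    else (if x₁ = x₂ then 0 else (if q ≤ 1-q then 0 else 1))

lemma dueckG_opt_eq (q : ℝ) (x : Fin 2) :
    dueckG q x x (dueckH q x x) = (1/2) * min q ((1-q)*(2-q)) := by
  fin_cases x <;>
  · rcases le_or_gt q ((1-q)*(2-q)) with h | h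
    · rw [min_eq_left h]
      simp [dueckG, Fin.sum_univ_two, dueckH, h]
      ring
    · rw [min_eq_right h.le]
      simp [dueckG, Fin.sum_univ_two, dueckH, h.not_ge]
      ring

lemma dueckG_opt_ne (q : ℝ) (x₁ x₂ : Fin 2) (hne : x₁ ≠ x₂) :
    dueckG q x₁ x₂ (dueckH q x₁ x₂) = (1/2) * q * (min q (1-q) + (1-q)) := by
  rcases le_or_gt q (1-q) with h | h
  · rw [min_eq_left h]
    fin_cases x₁ <;> fin_cases x₂ <;>
      first
      | exact absurd rfl hne
      | (simp [dueckG, Fin.sum_univ_two, dueckH, h]) <;> ring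
  · rw [min_eq_right h.le]
    fin_cases x₁ <;> fin_cases x₂ <;>
      first
      | exact absurd rfl hne
      | (simp [dueckG, Fin.sum_univ_two, dueckH, h.not_ge]) <;> ring

lemma dueck_main (q : ℝ) (hq0 : 0 < q) (hq1 : q < 1)
    (PX : Fin 2 → Fin 2 → ℝ) (hPX0 : ∀ x₁ x₂, 0 ≤ PX x₁ x₂)
    (hPX1 : ∑ x₁, ∑ x₂, PX x₁ x₂ = 1) :
    (⨅ h : Fin 2 → Fin 2 → Fin 2 → Fin 2 → Fin 2,
        ∑ x₁ : Fin 2, ∑ x₂ : Fin 2, ∑ s₁ : Fin 2, ∑ s₂ : Fin 2, ∑ n : Fin 2,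
          PX x₁ x₂ * (if s₁ = 1 then q else 1 - q) *
            (if s₂ = 1 then q else 1 - q) * (1 / 2) *
            (if h x₁ x₂ (s₁ * (x₁ + n)) (s₂ * (x₂ + n)) = s₁ then (0:ℝ) else 1))
      = (1 / 2) * (PX 0 1 + PX 1 0) * q * (min q (1 - q) + (1 - q))
        + (1 / 2) * (1 - (PX 0 1 + PX 1 0)) * min q ((1 - q) * (2 - q)) := by
  have h1 : PX 0 0 + PX 0 1 + (PX 1 0 + PX 1 1) = 1 := by
    simpa [Fin.sum_univ_two] using hPX1
  have hFG : ∀ h : Fin 2 → Fin 2 → Fin 2 → Fin 2 → Fin 2,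
      (∑ x₁ : Fin 2, ∑ x₂ : Fin 2, ∑ s₁ : Fin 2, ∑ s₂ : Fin 2, ∑ n : Fin 2,
          PX x₁ x₂ * (if s₁ = 1 then q else 1 - q) *
            (if s₂ = 1 then q else 1 - q) * (1 / 2) *
            (if h x₁ x₂ (s₁ * (x₁ + n)) (s₂ * (x₂ + n)) = s₁ then (0:ℝ) else 1))
      = ∑ x₁ : Fin 2, ∑ x₂ : Fin 2, PX x₁ x₂ * dueckG q x₁ x₂ (h x₁ x₂) := by
    intro h
    simp only [dueckG, Finset.mul_sum]
    refine Finset.sum_congr rfl fun x₁ _ => Finset.sum_congr rfl fun x₂ _ =>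
      Finset.sum_congr rfl fun s₁ _ => Finset.sum_congr rfl fun s₂ _ =>
      Finset.sum_congr rfl fun n _ => by ring
  have hVeq : (1 / 2) * (PX 0 1 + PX 1 0) * q * (min q (1 - q) + (1 - q))
        + (1 / 2) * (1 - (PX 0 1 + PX 1 0)) * min q ((1 - q) * (2 - q))
      = PX 0 0 * ((1/2) * min q ((1-q)*(2-q)))
        + PX 0 1 * ((1/2) * q * (min q (1-q) + (1-q)))
        + (PX 1 0 * ((1/2) * q * (min q (1-q) + (1-q)))
          + PX 1 1 * ((1/2) * min q ((1-q)*(2-q)))) := by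
    linear_combination (-(1/2) * min q ((1-q)*(2-q))) * h1
  have key : ∀ h : Fin 2 → Fin 2 → Fin 2 → Fin 2 → Fin 2,
      (1 / 2) * (PX 0 1 + PX 1 0) * q * (min q (1 - q) + (1 - q))
        + (1 / 2) * (1 - (PX 0 1 + PX 1 0)) * min q ((1 - q) * (2 - q))
      ≤ ∑ x₁ : Fin 2, ∑ x₂ : Fin 2, PX x₁ x₂ * dueckG q x₁ x₂ (h x₁ x₂) := by
    intro h
    rw [hVeq]
    simp only [Fin.sum_univ_two]
    refine add_le_add (add_le_add ?_ ?_) (add_le_add ?_ ?_)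
    · exact mul_le_mul_of_nonneg_left (dueckG_lb_eq q hq0 hq1 0 _) (hPX0 0 0)
    · exact mul_le_mul_of_nonneg_left (dueckG_lb_ne q hq0 hq1 0 1 (by decide) _) (hPX0 0 1)
    · exact mul_le_mul_of_nonneg_left (dueckG_lb_ne q hq0 hq1 1 0 (by decide) _) (hPX0 1 0)
    · exact mul_le_mul_of_nonneg_left (dueckG_lb_eq q hq0 hq1 1 _) (hPX0 1 1)
  refine le_antisymm ?_ (le_ciInf fun h => le_of_le_of_eq (key h) (hFG h).symm)
  have hub : (∑ x₁ : Fin 2, ∑ x₂ : Fin 2, PX x₁ x₂ * dueckG q x₁ x₂ (dueckH q x₁ x₂))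
      = (1 / 2) * (PX 0 1 + PX 1 0) * q * (min q (1 - q) + (1 - q))
        + (1 / 2) * (1 - (PX 0 1 + PX 1 0)) * min q ((1 - q) * (2 - q)) := by
    simp only [Fin.sum_univ_two, dueckG_opt_eq q 0, dueckG_opt_eq q 1,
      dueckG_opt_ne q 0 1 (by decide), dueckG_opt_ne q 1 0 (by decide)]
    linear_combination ((1/2) * min q ((1-q)*(2-q))) * h1
  have hbdd : BddBelow (Set.range fun h : Fin 2 → Fin 2 → Fin 2 → Fin 2 → Fin 2 =>
      ∑ x₁ : Fin 2, ∑ x₂ : Fin 2, ∑ s₁ : Fin 2, ∑ s₂ : Fin 2, ∑ n : Fin 2,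
        PX x₁ x₂ * (if s₁ = 1 then q else 1 - q) *
          (if s₂ = 1 then q else 1 - q) * (1 / 2) *
          (if h x₁ x₂ (s₁ * (x₁ + n)) (s₂ * (x₂ + n)) = s₁ then (0:ℝ) else 1)) := by
    refine ⟨(1 / 2) * (PX 0 1 + PX 1 0) * q * (min q (1 - q) + (1 - q))
        + (1 / 2) * (1 - (PX 0 1 + PX 1 0)) * min q ((1 - q) * (2 - q)), ?_⟩
    rintro r ⟨h, rfl⟩
    exact le_of_le_of_eq (key h) (hFG h).symm
  exact (ciInf_le hbdd (dueckH q)).trans (le_of_eq ((hFG (dueckH q)).trans hub))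


/-- **Dueck BC, optimal sensing distortion:** states `S₁, S₂` i.i.d.
Bernoulli(q), noise `N ~ Bernoulli(1/2)`, inputs `(X₁,X₂)` with joint pmf `PX`
independent of `(S₁,S₂,N)`, outputs `Y_k' = S_k (X_k ⊕ N)`.  With
`t = P(X₁ ≠ X₂)`, the minimal expected Hamming distortion over all estimators
of `S_k` from `(X₁, X₂, Y₁', Y₂')` equals
`½ t q (min{q,1−q} + (1−q)) + ½ (1−t) min{q, (1−q)(2−q)}` for each `k`. -/
theorem stmt_17 (q : ℝ) (hq0 : 0 < q) (hq1 : q < 1)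
    (PX : Fin 2 → Fin 2 → ℝ) (hPX0 : ∀ x₁ x₂, 0 ≤ PX x₁ x₂)
    (hPX1 : ∑ x₁, ∑ x₂, PX x₁ x₂ = 1) :
    (⨅ h : Fin 2 → Fin 2 → Fin 2 → Fin 2 → Fin 2,
        ∑ x₁ : Fin 2, ∑ x₂ : Fin 2, ∑ s₁ : Fin 2, ∑ s₂ : Fin 2, ∑ n : Fin 2,
          PX x₁ x₂ * (if s₁ = 1 then q else 1 - q) *
            (if s₂ = 1 then q else 1 - q) * (1 / 2) *
            (if h x₁ x₂ (s₁ * (x₁ + n)) (s₂ * (x₂ + n)) = s₁ then (0:ℝ) else 1))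
      = (1 / 2) * (PX 0 1 + PX 1 0) * q * (min q (1 - q) + (1 - q))
        + (1 / 2) * (1 - (PX 0 1 + PX 1 0)) * min q ((1 - q) * (2 - q))
    ∧ (⨅ h : Fin 2 → Fin 2 → Fin 2 → Fin 2 → Fin 2,
        ∑ x₁ : Fin 2, ∑ x₂ : Fin 2, ∑ s₁ : Fin 2, ∑ s₂ : Fin 2, ∑ n : Fin 2,
          PX x₁ x₂ * (if s₁ = 1 then q else 1 - q) *
            (if s₂ = 1 then q else 1 - q) * (1 / 2) *
            (if h x₁ x₂ (s₁ * (x₁ + n)) (s₂ * (x₂ + n)) = s₂ then (0:ℝ) else 1))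
      = (1 / 2) * (PX 0 1 + PX 1 0) * q * (min q (1 - q) + (1 - q))
        + (1 / 2) * (1 - (PX 0 1 + PX 1 0)) * min q ((1 - q) * (2 - q)) := by
  refine ⟨dueck_main q hq0 hq1 PX hPX0 hPX1, ?_⟩
  have hPX1' : ∑ x₁, ∑ x₂, (fun a b => PX b a) x₁ x₂ = 1 := by
    simp only [Fin.sum_univ_two] at hPX1 ⊢
    linarith
  have h2 := dueck_main q hq0 hq1 (fun a b => PX b a) (fun a b => hPX0 b a) hPX1'
  have hsum : ∀ h : Fin 2 → Fin 2 → Fin 2 → Fin 2 → Fin 2,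
      (∑ x₁ : Fin 2, ∑ x₂ : Fin 2, ∑ s₁ : Fin 2, ∑ s₂ : Fin 2, ∑ n : Fin 2,
          PX x₁ x₂ * (if s₁ = 1 then q else 1 - q) *
            (if s₂ = 1 then q else 1 - q) * (1 / 2) *
            (if h x₁ x₂ (s₁ * (x₁ + n)) (s₂ * (x₂ + n)) = s₂ then (0:ℝ) else 1))
      = (∑ x₁ : Fin 2, ∑ x₂ : Fin 2, ∑ s₁ : Fin 2, ∑ s₂ : Fin 2, ∑ n : Fin 2,
          (fun a b => PX b a) x₁ x₂ * (if s₁ = 1 then q else 1 - q) *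
            (if s₂ = 1 then q else 1 - q) * (1 / 2) *
            (if (fun c₁ c₂ d₁ d₂ => h c₂ c₁ d₂ d₁) x₁ x₂ (s₁ * (x₁ + n)) (s₂ * (x₂ + n)) = s₁
              then (0:ℝ) else 1)) := by
    intro h
    dsimp only
    symm
    rw [Finset.sum_comm]
    refine Finset.sum_congr rfl fun x₂ _ => Finset.sum_congr rfl fun x₁ _ => ?_
    rw [Finset.sum_comm]
    exact Finset.sum_congr rfl fun s₂ _ => Finset.sum_congr rfl fun s₁ _ =>
      Finset.sum_congr rfl fun n _ => by ring
  have hrange : (Set.range fun h : Fin 2 → Fin 2 → Fin 2 → Fin 2 → Fin 2 =>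
      ∑ x₁ : Fin 2, ∑ x₂ : Fin 2, ∑ s₁ : Fin 2, ∑ s₂ : Fin 2, ∑ n : Fin 2,
          PX x₁ x₂ * (if s₁ = 1 then q else 1 - q) *
            (if s₂ = 1 then q else 1 - q) * (1 / 2) *
            (if h x₁ x₂ (s₁ * (x₁ + n)) (s₂ * (x₂ + n)) = s₂ then (0:ℝ) else 1))
      = (Set.range fun h : Fin 2 → Fin 2 → Fin 2 → Fin 2 → Fin 2 =>
      ∑ x₁ : Fin 2, ∑ x₂ : Fin 2, ∑ s₁ : Fin 2, ∑ s₂ : Fin 2, ∑ n : Fin 2,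
          (fun a b => PX b a) x₁ x₂ * (if s₁ = 1 then q else 1 - q) *
            (if s₂ = 1 then q else 1 - q) * (1 / 2) *
            (if h x₁ x₂ (s₁ * (x₁ + n)) (s₂ * (x₂ + n)) = s₁ then (0:ℝ) else 1)) := by
    ext r
    constructor
    · rintro ⟨h, rfl⟩
      exact ⟨fun c₁ c₂ d₁ d₂ => h c₂ c₁ d₂ d₁, (hsum h).symm⟩
    · rintro ⟨h, rfl⟩
      exact ⟨fun c₁ c₂ d₁ d₂ => h c₂ c₁ d₂ d₁,
        hsum (fun c₁ c₂ d₁ d₂ => h c₂ c₁ d₂ d₁)⟩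
  have hEq : (⨅ h : Fin 2 → Fin 2 → Fin 2 → Fin 2 → Fin 2,
        ∑ x₁ : Fin 2, ∑ x₂ : Fin 2, ∑ s₁ : Fin 2, ∑ s₂ : Fin 2, ∑ n : Fin 2,
          PX x₁ x₂ * (if s₁ = 1 then q else 1 - q) *
            (if s₂ = 1 then q else 1 - q) * (1 / 2) *
            (if h x₁ x₂ (s₁ * (x₁ + n)) (s₂ * (x₂ + n)) = s₂ then (0:ℝ) else 1))
      = (⨅ h : Fin 2 → Fin 2 → Fin 2 → Fin 2 → Fin 2,
        ∑ x₁ : Fin 2, ∑ x₂ : Fin 2, ∑ s₁ : Fin 2, ∑ s₂ : Fin 2, ∑ n : Fin 2,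
          (fun a b => PX b a) x₁ x₂ * (if s₁ = 1 then q else 1 - q) *
            (if s₂ = 1 then q else 1 - q) * (1 / 2) *
            (if h x₁ x₂ (s₁ * (x₁ + n)) (s₂ * (x₂ + n)) = s₁ then (0:ℝ) else 1)) :=
    congrArg sInf hrange
  rw [hEq, h2]
  ring_nf
end

section
/- Let q ∈ [0,1] and define f : [0,1] → ℝ by f(t) := (1/2)·t·q·( min{q, 1−q} + (1−q) ) + (1/2)·(1−t)·min{ q, (1−q)(2−q) }. Then the minimum of f over t ∈ [0,1] equals: q/2 if q ∈ [0, 1/2]; q(1−q) if q ∈ [1/2, 2/3]; and (1−q)(2−q)/2 if q ∈ [2/3, 1]. -/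
open Finset

lemma inf_affine (A B : ℝ) :
    sInf ((fun t : ℝ => t * A + (1 - t) * B) '' Set.Icc 0 1) = min A B := by
  have hbdd : BddBelow ((fun t : ℝ => t * A + (1 - t) * B) '' Set.Icc 0 1) := by
    refine ⟨min A B, ?_⟩
    rintro x ⟨t, ⟨ht0, ht1⟩, rfl⟩
    have h1 : min A B ≤ A := min_le_left _ _
    have h2 : min A B ≤ B := min_le_right _ _
    show min A B ≤ t * A + (1 - t) * B
    nlinarith
  apply le_antisymm
  · rcases le_total A B with h | h
    · have hA : A ∈ (fun t : ℝ => t * A + (1 - t) * B) '' Set.Icc 0 1 :=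
        ⟨1, by constructor <;> norm_num, by ring⟩
      rw [min_eq_left h]
      exact csInf_le hbdd hA
    · have hB : B ∈ (fun t : ℝ => t * A + (1 - t) * B) '' Set.Icc 0 1 :=
        ⟨0, by constructor <;> norm_num, by ring⟩
      rw [min_eq_right h]
      exact csInf_le hbdd hB
  · apply le_csInf ((Set.nonempty_Icc.mpr (by norm_num : (0:ℝ) ≤ 1)).image _)
    rintro x ⟨t, ⟨ht0, ht1⟩, rfl⟩
    have h1 : min A B ≤ A := min_le_left _ _
    have h2 : min A B ≤ B := min_le_right _ _
    show min A B ≤ t * A + (1 - t) * B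
    nlinarith

/-- **Minimum distortion of the Dueck BC as a function of `t = P(X₁≠X₂)`:**
the minimum over `t ∈ [0,1]` of
`f(t) = ½ t q (min{q,1−q} + (1−q)) + ½ (1−t) min{q, (1−q)(2−q)}`
equals `q/2` for `q ∈ [0,1/2]`, `q(1−q)` for `q ∈ [1/2,2/3]`, and
`(1−q)(2−q)/2` for `q ∈ [2/3,1]`. -/
theorem stmt_18 (q : ℝ) (hq0 : 0 ≤ q) (hq1 : q ≤ 1) :
    (q ≤ 1 / 2 →
      sInf ((fun t : ℝ =>
          (1 / 2) * t * q * (min q (1 - q) + (1 - q))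
            + (1 / 2) * (1 - t) * min q ((1 - q) * (2 - q))) '' Set.Icc 0 1)
        = q / 2)
    ∧ (1 / 2 ≤ q → q ≤ 2 / 3 →
      sInf ((fun t : ℝ =>
          (1 / 2) * t * q * (min q (1 - q) + (1 - q))
            + (1 / 2) * (1 - t) * min q ((1 - q) * (2 - q))) '' Set.Icc 0 1)
        = q * (1 - q))
    ∧ (2 / 3 ≤ q →
      sInf ((fun t : ℝ =>
          (1 / 2) * t * q * (min q (1 - q) + (1 - q))
            + (1 / 2) * (1 - t) * min q ((1 - q) * (2 - q))) '' Set.Icc 0 1)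
        = (1 - q) * (2 - q) / 2) := by
  have hfun : (fun t : ℝ =>
      (1 / 2) * t * q * (min q (1 - q) + (1 - q))
        + (1 / 2) * (1 - t) * min q ((1 - q) * (2 - q)))
      = fun t : ℝ => t * ((1 / 2) * q * (min q (1 - q) + (1 - q)))
          + (1 - t) * ((1 / 2) * min q ((1 - q) * (2 - q))) := by
    funext t; ring
  rw [hfun, inf_affine]
  refine ⟨fun h => ?_, fun h1 h2 => ?_, fun h => ?_⟩
  · rw [min_eq_left (by linarith : q ≤ 1 - q),
        min_eq_left (by nlinarith : q ≤ (1 - q) * (2 - q))]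
    have e : (1 / 2) * q * (q + (1 - q)) = (1 / 2) * q := by ring
    rw [e, min_self]; ring
  · rw [min_eq_right (by linarith : 1 - q ≤ q)]
    have hm : (1 / 2) * q * (1 - q + (1 - q)) ≤ (1 / 2) * min q ((1 - q) * (2 - q)) := by
      rcases le_total q ((1 - q) * (2 - q)) with h | h
      · rw [min_eq_left h]; nlinarith
      · rw [min_eq_right h]; nlinarith
    rw [min_eq_left hm]; ring
  · rw [min_eq_right (by linarith : 1 - q ≤ q),
        min_eq_right (by nlinarith : (1 - q) * (2 - q) ≤ q)]
    rw [min_eq_right (by nlinarith)]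
    ring
end
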